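/- arXiv:2410.16774 — 5 statements merged into one kernel-verified Lean document; each statement's English description precedes it below -/
import Mathlib

section
/- Suppose sequences of functions A_n(z), B_n(z) satisfy the supplementary conditions B_n(z)+B_{n+1}(z)=zA_n(z)−v'(z) (S1) and 1+z(B_{n+1}(z)−B_n(z))=β_{n+1}A_{n+1}(z)−β_nA_{n−1}(z) (S2), with B_0=0 and A_{−1}=0. Then the summed condition (S2') holds: Σ_{j=0}^{n−1}A_j(z) + B_n(z)² + v'(z)B_n(z) = β_n A_n(z) A_{n−1}(z). -/
/-!
Writing `C_n = β_n A_{n-1}` (so `C_0 = 0` by `A_{-1} = 0`), (S2) reads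
`1 + z (B_{n+1} - B_n) = β_{n+1} A_{n+1} - C_n`. By (S1) the increment of `B_n² + v' B_n` is
`(B_{n+1} - B_n)(B_{n+1} + B_n + v') = z A_n (B_{n+1} - B_n)`, so adding `A_n` to it gives
`A_n (β_{n+1} A_{n+1} - C_n)`, and (S2') telescopes from `B_0 = 0`.
-/

open Finset

theorem sum_add_sq_add_mul_succ_of_supplementary {R : Type*} [CommRing R] (z v c : R)
    (β a b : ℕ → R) (n : ℕ)
    (hn : ∑ j ∈ range n, a j + b n ^ 2 + v * b n = c * a n)
    (hS1 : b n + b (n + 1) = z * a n - v)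
    (hS2 : 1 + z * (b (n + 1) - b n) = β (n + 1) * a (n + 1) - c) :
    ∑ j ∈ range (n + 1), a j + b (n + 1) ^ 2 + v * b (n + 1)
      = β (n + 1) * a (n + 1) * a n := by
  rw [sum_range_succ]
  linear_combination hn + a n * hS2 + (b (n + 1) - b n) * hS1

theorem supplementary_condition_S2'_general (v' : ℝ → ℝ) (β : ℕ → ℝ)
    (A B : ℕ → ℝ → ℝ)
    (hB0 : ∀ z, B 0 z = 0)
    (hS1 : ∀ n z, B n z + B (n + 1) z = z * A n z - v' z)
    (hS2 : ∀ n z, 1 ≤ n →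
      1 + z * (B (n + 1) z - B n z) = β (n + 1) * A (n + 1) z - β n * A (n - 1) z)
    (hS2zero : ∀ z, 1 + z * (B 1 z - B 0 z) = β 1 * A 1 z)
    (n : ℕ) (hn : 1 ≤ n) (z : ℝ) :
    ∑ j ∈ Finset.range n, A j z + (B n z) ^ 2 + v' z * B n z
      = β n * A n z * A (n - 1) z := by
  induction n, hn using Nat.le_induction with
  | base =>
    refine sum_add_sq_add_mul_succ_of_supplementary z (v' z) 0 β (A · z) (B · z) 0
      (by simp [hB0]) (hS1 0 z) ?_
    rw [sub_zero]
    exact hS2zero z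
  | succ n hn ih =>
    refine sum_add_sq_add_mul_succ_of_supplementary z (v' z) (β n * A (n - 1) z) β
      (A · z) (B · z) n ?_ (hS1 n z) (hS2 n z hn)
    linear_combination ih

/-- From the supplementary conditions (S1) and (S2), the summed condition (S2')
holds: `∑_{j<n} A_j(z) + B_n(z)^2 + v'(z) B_n(z) = β_n A_n(z) A_{n-1}(z)`. -/
theorem supplementary_condition_S2' (v' : ℝ → ℝ) (β : ℕ → ℝ)
    (A B : ℕ → ℝ → ℝ)
    (hβ0 : β 0 = 0)
    (hB0 : ∀ z, B 0 z = 0)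
    (hS1 : ∀ n z, B n z + B (n + 1) z = z * A n z - v' z)
    (hS2 : ∀ n z, 1 ≤ n →
      1 + z * (B (n + 1) z - B n z) = β (n + 1) * A (n + 1) z - β n * A (n - 1) z)
    (hS2zero : ∀ z, 1 + z * (B 1 z - B 0 z) = β 1 * A 1 z)
    (n : ℕ) (hn : 1 ≤ n) (z : ℝ) :
    ∑ j ∈ Finset.range n, A j z + (B n z) ^ 2 + v' z * B n z
      = β n * A n z * A (n - 1) z :=
  supplementary_condition_S2'_general v' β A B hB0 hS1 hS2 hS2zero n hn z
end

section
/- Let a>0, and let A_j(z)=aR_j/(z²−a²)+2 for j=0,…,n and B_n(z)=z r_n/(z²−a²). Suppose the identity Σ_{j=0}^{n−1}A_j(z) + B_n(z)² + 2z·B_n(z) = β_n A_n(z)A_{n−1}(z) holds for all z with z²≠a². Then the following three relations hold: (i) r_n² = β_n R_n R_{n−1}; (ii) aΣ_{j=0}^{n−1}R_j + r_n² + 2a²r_n = 2aβ_n(R_n+R_{n−1}); (iii) 2β_n = n + r_n. -/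
/-! Put `w = z² - a²`. Multiplying the identity by `w²` turns it into an identity between
quadratic polynomials in `w` (using `z² = w + a²`), valid for every `w > 0`, since each such `w`
comes from `z = √(w + a²)`. A quadratic with infinitely many roots is zero, and its coefficients of
`w⁰`, `w¹`, `w²` are `a²` times (i), relation (ii), and twice (iii). -/

open Polynomial

theorem Polynomial.quadratic_coeffs_eq_zero_of_infinite_roots {R : Type*} [CommRing R] [IsDomain R]
    {c₀ c₁ c₂ : R} (h : {w : R | c₀ + c₁ * w + c₂ * w ^ 2 = 0}.Infinite) :
    c₀ = 0 ∧ c₁ = 0 ∧ c₂ = 0 := by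
  have hp : C c₀ + C c₁ * X + C c₂ * X ^ 2 = 0 :=
    eq_zero_of_infinite_isRoot _ (by simpa using h)
  refine ⟨?_, ?_, ?_⟩
  · simpa using congrArg (coeff · 0) hp
  · simpa using congrArg (coeff · 1) hp
  · simpa using congrArg (coeff · 2) hp

theorem sum_range_div_add_const {K : Type*} [Field K] (n : ℕ) (c d : K) (f : ℕ → K) :
    ∑ j ∈ Finset.range n, (f j / d + c) = (∑ j ∈ Finset.range n, f j) / d + n * c := by
  rw [Finset.sum_add_distrib, Finset.sum_div, Finset.sum_const, Finset.card_range, nsmul_eq_mul]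

theorem partial_fraction_identity_cleared {a : ℝ} {n : ℕ} {R : ℕ → ℝ} {rn βn : ℝ}
    (h : ∀ z : ℝ, z ^ 2 ≠ a ^ 2 →
      ∑ j ∈ Finset.range n, (a * R j / (z ^ 2 - a ^ 2) + 2)
        + (z * rn / (z ^ 2 - a ^ 2)) ^ 2
        + 2 * z * (z * rn / (z ^ 2 - a ^ 2))
      = βn * (a * R n / (z ^ 2 - a ^ 2) + 2)
          * (a * R (n - 1) / (z ^ 2 - a ^ 2) + 2))
    {w : ℝ} (hw : 0 < w) :
    a * (∑ j ∈ Finset.range n, R j) * w + 2 * n * w ^ 2 + (w + a ^ 2) * rn ^ 2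
        + 2 * (w + a ^ 2) * rn * w
      = βn * (a * R n + 2 * w) * (a * R (n - 1) + 2 * w) := by
  set z := √(w + a ^ 2)
  have hz : z ^ 2 = w + a ^ 2 := Real.sq_sqrt (by positivity)
  have hz' : z ^ 2 - a ^ 2 = w := by rw [hz]; ring
  have hza := h z (by rw [hz]; linarith)
  simp only [sum_range_div_add_const, ← Finset.mul_sum, hz'] at hza
  field_simp at hza
  linear_combination hza - (rn ^ 2 + 2 * w * rn) * hz

theorem partial_fraction_relations_general (a : ℝ) (ha : 0 < a) (n : ℕ)
    (R : ℕ → ℝ) (rn βn : ℝ)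
    (h : ∀ z : ℝ, z ^ 2 ≠ a ^ 2 →
      ∑ j ∈ Finset.range n, (a * R j / (z ^ 2 - a ^ 2) + 2)
        + (z * rn / (z ^ 2 - a ^ 2)) ^ 2
        + 2 * z * (z * rn / (z ^ 2 - a ^ 2))
      = βn * (a * R n / (z ^ 2 - a ^ 2) + 2)
          * (a * R (n - 1) / (z ^ 2 - a ^ 2) + 2)) :
    rn ^ 2 = βn * R n * R (n - 1)
      ∧ a * ∑ j ∈ Finset.range n, R j + rn ^ 2 + 2 * a ^ 2 * rn
          = 2 * a * βn * (R n + R (n - 1))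
      ∧ 2 * βn = n + rn := by
  obtain ⟨h₀, h₁, h₂⟩ := quadratic_coeffs_eq_zero_of_infinite_roots
    (c₀ := a ^ 2 * (rn ^ 2 - βn * R n * R (n - 1)))
    (c₁ := a * ∑ j ∈ Finset.range n, R j + rn ^ 2 + 2 * a ^ 2 * rn
      - 2 * a * βn * (R n + R (n - 1)))
    (c₂ := 2 * n + 2 * rn - 4 * βn)
    ((Set.Ioi_infinite 0).mono fun w hw => by
      simp only [Set.mem_ofPred_eq]
      linear_combination partial_fraction_identity_cleared h hw)
  have ha₂ : a ^ 2 ≠ 0 := by positivity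
  refine ⟨?_, ?_, ?_⟩
  · linear_combination (mul_eq_zero.mp h₀).resolve_left ha₂
  · linear_combination h₁
  · linear_combination -h₂ / 2

/-- Extracting partial-fraction coefficients from the identity (S2') with the
explicit rational functions `A_j` and `B_n` yields the three relations
(i) `r_n² = β_n R_n R_{n-1}`, (ii) `a ∑ R_j + r_n² + 2a² r_n = 2aβ_n(R_n+R_{n-1})`,
(iii) `2β_n = n + r_n`. -/
theorem partial_fraction_relations (a : ℝ) (ha : 0 < a) (n : ℕ) (hn : 1 ≤ n)
    (R : ℕ → ℝ) (rn βn : ℝ)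
    (h : ∀ z : ℝ, z ^ 2 ≠ a ^ 2 →
      ∑ j ∈ Finset.range n, (a * R j / (z ^ 2 - a ^ 2) + 2)
        + (z * rn / (z ^ 2 - a ^ 2)) ^ 2
        + 2 * z * (z * rn / (z ^ 2 - a ^ 2))
      = βn * (a * R n / (z ^ 2 - a ^ 2) + 2)
          * (a * R (n - 1) / (z ^ 2 - a ^ 2) + 2)) :
    rn ^ 2 = βn * R n * R (n - 1)
      ∧ a * ∑ j ∈ Finset.range n, R j + rn ^ 2 + 2 * a ^ 2 * rn
          = 2 * a * βn * (R n + R (n - 1))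
      ∧ 2 * βn = n + rn :=
  partial_fraction_relations_general a ha n R rn βn h
end

section
/- Let r, R be differentiable real functions of a satisfying the Riccati system r' = 2r²/R − (n+r)R and R' = R² + 4r − 2aR − 2rR/a (with R(a), a ≠ 0, and 2a−R ≠ 0). Then r = aR'/(2(2a−R)) + aR/2, and R satisfies the second-order ODE R'' = ((a−R)/((2a−R)R))(R')² + (R/(a(2a−R)))R' + (1/a)(2a−R)(a²−2n−1−aR)R. -/
/-!
Eliminating `r`: the equation for `R'` is linear in `r`, with coefficient `2 (2a - R) / a`, so it
can be solved for `r`. Differentiating the equation for `R'` once more (its right-hand side is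
differentiable since `r` and `R` are), substituting `r'` from the first Riccati equation and
eliminating `r` leaves an equation in `R`, `R'`, `R''` alone.
-/

open Filter Topology

noncomputable def riccatiRField (r R : ℝ → ℝ) (x : ℝ) : ℝ :=
  R x ^ 2 + 4 * r x - 2 * x * R x - 2 * r x * R x / x

lemma riccati_r_eq {a r R R' : ℝ} (ha : a ≠ 0) (h2a : 2 * a - R ≠ 0)
    (hR' : R' = R ^ 2 + 4 * r - 2 * a * R - 2 * r * R / a) :
    r = a * R' / (2 * (2 * a - R)) + a * R / 2 := by
  rw [hR', div_add_div _ _ (mul_ne_zero two_ne_zero h2a) two_ne_zero, eq_div_iff (by simp [h2a])]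
  field_simp
  ring

lemma hasDerivAt_riccatiRField {r R : ℝ → ℝ} {r' R' a : ℝ} (hr : HasDerivAt r r' a)
    (hR : HasDerivAt R R' a) (ha : a ≠ 0) :
    HasDerivAt (riccatiRField r R)
      (2 * R a * R' + 4 * r' - 2 * R a - 2 * a * R'
        - 2 * (r' * R a + r a * R') / a + 2 * r a * R a / a ^ 2) a := by
  have h := (((hR.fun_pow 2).fun_add (hr.const_mul 4)).fun_sub
    (((hasDerivAt_id a).const_mul 2).fun_mul hR)).fun_sub
    (((hr.const_mul 2).fun_mul hR).fun_div (hasDerivAt_id a) ha)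
  refine h.congr_deriv ?_
  simp only [id]
  field_simp
  ring

lemma riccati_second_order_eq {n a r R r' R' R'' : ℝ} (ha : a ≠ 0) (hR : R ≠ 0)
    (h2a : 2 * a - R ≠ 0)
    (hr' : r' = 2 * r ^ 2 / R - (n + r) * R)
    (hR' : R' = R ^ 2 + 4 * r - 2 * a * R - 2 * r * R / a)
    (hR'' : R'' = 2 * R * R' + 4 * r' - 2 * R - 2 * a * R' - 2 * (r' * R + r * R') / a
      + 2 * r * R / a ^ 2) :
    R'' = (a - R) / ((2 * a - R) * R) * R' ^ 2 + R / (a * (2 * a - R)) * R'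
      + 1 / a * (2 * a - R) * (a ^ 2 - 2 * n - 1 - a * R) * R := by
  rw [hR'', hr', hR']
  field_simp
  ring

/-- From the Riccati system for `r` and `R`, one solves
`r = a R'/(2(2a - R)) + aR/2` and deduces a second-order ODE for `R`. -/
theorem Rn_second_order_ODE (n : ℝ) (I : Set ℝ) (hI : IsOpen I)
    (r R : ℝ → ℝ)
    (hpos : ∀ a ∈ I, 0 < a)
    (hRne : ∀ a ∈ I, R a ≠ 0)
    (h2a : ∀ a ∈ I, 2 * a - R a ≠ 0)
    (hr : ∀ a ∈ I, HasDerivAt r (2 * (r a) ^ 2 / R a - (n + r a) * R a) a)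
    (hR : ∀ a ∈ I, HasDerivAt R
      ((R a) ^ 2 + 4 * r a - 2 * a * R a - 2 * r a * R a / a) a)
    (a : ℝ) (haI : a ∈ I) :
    r a = a * deriv R a / (2 * (2 * a - R a)) + a * R a / 2
    ∧ deriv (deriv R) a
      = (a - R a) / ((2 * a - R a) * R a) * (deriv R a) ^ 2
        + R a / (a * (2 * a - R a)) * deriv R a
        + 1 / a * (2 * a - R a) * (a ^ 2 - 2 * n - 1 - a * R a) * R a := by
  have ha : a ≠ 0 := (hpos a haI).ne'
  have hR' : deriv R a = R a ^ 2 + 4 * r a - 2 * a * R a - 2 * r a * R a / a := (hR a haI).deriv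
  have hderiv_eq : deriv R =ᶠ[𝓝 a] riccatiRField r R :=
    eventually_of_mem (hI.mem_nhds haI) fun x hx => (hR x hx).deriv
  have hR'' : HasDerivAt (deriv R) _ a :=
    (hasDerivAt_riccatiRField (hr a haI) (hR a haI).differentiableAt.hasDerivAt ha)
      |>.congr_of_eventuallyEq hderiv_eq
  exact ⟨riccati_r_eq ha (h2a a haI) hR',
    riccati_second_order_eq ha (hRne a haI) (h2a a haI) rfl hR' hR''.deriv⟩
end

section
/- Let r be a twice differentiable real function of a and R a differentiable function with R ≠ 0, satisfying r' = 2r²/R − (n+r)R and R' = R² + 4r − 2aR − 2rR/a on an interval of positive reals. Then r satisfies the second-order second-degree ODE 4(a²+r)²((r')² + 8r²(n+r)) − a²(r'' + 8nr + 12r²)² = 0. -/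
/-- From the Riccati system for `r` and `R`, `r` satisfies the second-order
second-degree ODE `4(a²+r)²((r')² + 8r²(n+r)) - a²(r'' + 8nr + 12r²)² = 0`. -/
theorem rn_second_order_ODE (n : ℝ) (I : Set ℝ) (hI : IsOpen I)
    (r R : ℝ → ℝ)
    (hpos : ∀ a ∈ I, 0 < a)
    (hRne : ∀ a ∈ I, R a ≠ 0)
    (hr : ∀ a ∈ I, HasDerivAt r (2 * (r a) ^ 2 / R a - (n + r a) * R a) a)
    (hR : ∀ a ∈ I, HasDerivAt R
      ((R a) ^ 2 + 4 * r a - 2 * a * R a - 2 * r a * R a / a) a)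
    (a : ℝ) (haI : a ∈ I) :
    4 * (a ^ 2 + r a) ^ 2 * ((deriv r a) ^ 2 + 8 * (r a) ^ 2 * (n + r a))
      - a ^ 2 * (deriv (deriv r) a + 8 * n * r a + 12 * (r a) ^ 2) ^ 2 = 0 := by
  have ha : a ≠ 0 := (hpos a haI).ne'
  have hRa : R a ≠ 0 := hRne a haI
  set r' : ℝ := 2 * (r a) ^ 2 / R a - (n + r a) * R a with hr'def
  set R' : ℝ := (R a) ^ 2 + 4 * r a - 2 * a * R a - 2 * r a * R a / a with hR'def
  have hra : HasDerivAt r r' a := hr a haI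
  have hRa' : HasDerivAt R R' a := hR a haI
  set f : ℝ → ℝ := fun x => 2 * (r x) ^ 2 / R x - (n + r x) * R x with hf
  have hev : deriv r =ᶠ[nhds a] f := by
    filter_upwards [hI.mem_nhds haI] with x hx using (hr x hx).deriv
  have h1 : HasDerivAt (fun x => 2 * (r x) ^ 2 / R x)
      (((2 * (2 * r a ^ 1 * r')) * R a - 2 * (r a) ^ 2 * R') / (R a) ^ 2) a := by
    exact ((hra.pow 2).const_mul 2).div hRa' hRa
  have h2 : HasDerivAt (fun x => (n + r x) * R x)
      (r' * R a + (n + r a) * R') a := (hra.const_add n).mul hRa'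
  have hfd : HasDerivAt f
      (((2 * (2 * r a ^ 1 * r')) * R a - 2 * (r a) ^ 2 * R') / (R a) ^ 2
        - (r' * R a + (n + r a) * R')) a := h1.sub h2
  have h3 : deriv (deriv r) a = ((2 * (2 * r a ^ 1 * r')) * R a - 2 * (r a) ^ 2 * R') / (R a) ^ 2
        - (r' * R a + (n + r a) * R') := by
    rw [hev.deriv_eq]; exact hfd.deriv
  have h4 : deriv r a = r' := hra.deriv
  rw [h3, h4, hr'def, hR'def]
  field_simp
  ring
end

section
/- Let σ be twice differentiable and r differentiable on an interval of positive reals, satisfying r² = 2a²r + σ − aσ' and a²(r')² − (σ − 2a²r − r²)² = −8a²r²(n+r), with r − a² ≠ 0 and a⁴+σ−aσ' ≠ 0. Then σ satisfies the second-order fourth-degree ODE: [16a⁶ − a²(σ'')² − 4(a⁴+σ−aσ')(4a²+8n(σ−aσ')−(σ')²)]² = 16[4(a⁴+σ−aσ')(aσ'−2σ)² + 4a²σ''(aσ'−σ) − a⁴(σ'')²]·[4(2a²n+σ)(a⁴+σ−aσ') + 4a⁴ − a²σ'']. -/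
/-- The logarithmic derivative `σ_n` of the Hankel determinant satisfies a
second-order fourth-degree ordinary differential equation. -/
theorem sigma_second_order_ODE (n : ℝ) (I : Set ℝ) (hI : IsOpen I)
    (σ r : ℝ → ℝ)
    (hpos : ∀ a ∈ I, 0 < a)
    (hσ1 : ∀ a ∈ I, DifferentiableAt ℝ σ a)
    (hσ2 : ∀ a ∈ I, DifferentiableAt ℝ (deriv σ) a)
    (hr : ∀ a ∈ I, DifferentiableAt ℝ r a)
    (h1 : ∀ a ∈ I, (r a) ^ 2 = 2 * a ^ 2 * r a + σ a - a * deriv σ a)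
    (h2 : ∀ a ∈ I, a ^ 2 * (deriv r a) ^ 2
        - (σ a - 2 * a ^ 2 * r a - (r a) ^ 2) ^ 2
      = -8 * a ^ 2 * (r a) ^ 2 * (n + r a))
    (hra : ∀ a ∈ I, r a - a ^ 2 ≠ 0)
    (hne : ∀ a ∈ I, a ^ 4 + σ a - a * deriv σ a ≠ 0)
    (a : ℝ) (haI : a ∈ I) :
    (16 * a ^ 6 - a ^ 2 * (deriv (deriv σ) a) ^ 2
        - 4 * (a ^ 4 + σ a - a * deriv σ a)
            * (4 * a ^ 2 + 8 * n * (σ a - a * deriv σ a) - (deriv σ a) ^ 2)) ^ 2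
      = 16 * (4 * (a ^ 4 + σ a - a * deriv σ a) * (a * deriv σ a - 2 * σ a) ^ 2
            + 4 * a ^ 2 * deriv (deriv σ) a * (a * deriv σ a - σ a)
            - a ^ 4 * (deriv (deriv σ) a) ^ 2)
          * (4 * (2 * a ^ 2 * n + σ a) * (a ^ 4 + σ a - a * deriv σ a)
            + 4 * a ^ 4 - a ^ 2 * deriv (deriv σ) a) := by
  -- notation
  have hE1 := h1 a haI
  have hH2 := h2 a haI
  -- derivative of the first relation
  have hev : (fun x => (r x) ^ 2) =ᶠ[nhds a]
      (fun x => 2 * x ^ 2 * r x + σ x - x * deriv σ x) := by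
    filter_upwards [hI.mem_nhds haI] with x hx using h1 x hx
  have hdL : HasDerivAt (fun x => (r x) ^ 2) (2 * r a ^ 1 * deriv r a) a := by
    exact ((hr a haI).hasDerivAt.pow 2).congr_deriv (by norm_num)
  have hdR : HasDerivAt (fun x => 2 * x ^ 2 * r x + σ x - x * deriv σ x)
      ((2 * (2 * a)) * r a + 2 * a ^ 2 * deriv r a + deriv σ a
        - (1 * deriv σ a + a * deriv (deriv σ) a)) a := by
    have ha2 : HasDerivAt (fun x : ℝ => 2 * x ^ 2) (2 * (2 * a)) a := by
      simpa using (hasDerivAt_pow 2 a).const_mul 2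
    exact ((ha2.mul (hr a haI).hasDerivAt).add (hσ1 a haI).hasDerivAt).sub
      ((hasDerivAt_id a).mul (hσ2 a haI).hasDerivAt)
  have hL : 2 * (r a - a ^ 2) * deriv r a = a * (4 * r a - deriv (deriv σ) a) := by
    have := (hdL.congr_of_eventuallyEq hev.symm).unique hdR
    nlinarith [this]
  set s := σ a with hs
  set p := deriv σ a with hp
  set q := deriv (deriv σ) a with hq
  set t := r a with ht
  set w := deriv r a with hw
  have ha : (a : ℝ) ^ 4 ≠ 0 := pow_ne_zero 4 (ne_of_gt (hpos a haI))
  refine mul_left_cancel₀ ha ?_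
  linear_combination ((-16)*a^2*s*p^2*t^2 + (-128)*a^2*s^2*t^3 + 128*a^2*s^2*n*t^2 + 16*a^3*p^3*t^2 + 128*a^3*s*p*t^3 + (-256)*a^3*s*p*n*t^2 + 32*a^4*q*t^3 + 4*a^4*q^2*t^2 + 128*a^4*p^2*n*t^2 + 64*a^4*s*t^2 + (-256)*a^4*s*n*t^3 + 32*a^4*s*p^2*t + 512*a^4*s^2*t^2 + (-256)*a^4*s^2*n*t + (-64)*a^5*p*t^2 + 256*a^5*p*n*t^3 + (-32)*a^5*p^3*t + (-512)*a^5*s*p*t^2 + 512*a^5*s*p*n*t + (-128)*a^6*t^3 + (-128)*a^6*q*t^2 + (-8)*a^6*q^2*t + (-16)*a^6*p^2*t^2 + (-256)*a^6*p^2*n*t + (-128)*a^6*s*t + (-128)*a^6*s*t^3 + 1152*a^6*s*n*t^2 + (-16)*a^6*s*p^2 + (-640)*a^6*s^2*t + 128*a^6*s^2*n + 128*a^7*p*t + (-1152)*a^7*p*n*t^2 + 16*a^7*p^3 + 640*a^7*s*p*t + (-256)*a^7*s*p*n + 512*a^8*t^2 + (-256)*a^8*n*t^3 + 160*a^8*q*t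 + 4*a^8*q^2 + 32*a^8*p^2*t + 128*a^8*p^2*n + 64*a^8*s + 512*a^8*s*t^2 + (-1536)*a^8*s*n*t + 256*a^8*s^2 + (-64)*a^9*p + 1536*a^9*p*n*t + (-256)*a^9*s*p + (-640)*a^10*t + 1024*a^10*n*t^2 + (-64)*a^10*q + (-16)*a^10*p^2 + (-640)*a^10*s*t + 640*a^10*s*n + (-640)*a^11*p*n + 256*a^12 + (-1280)*a^12*n*t + 256*a^12*s + 512*a^14*n) * hH2 - ((-8)*a^4*s*p^2*t*w + (-64)*a^4*s^2*t^2*w + 64*a^4*s^2*n*t*w + 8*a^5*p^3*t*w + 64*a^5*s*p*t^2*w + (-128)*a^5*s*p*n*t*w + (-16)*a^5*s*p^2*t + 4*a^5*s*p^2*q + (-128)*a^5*s^2*t^2 + 128*a^5*s^2*n*t + 32*a^5*s^2*q*t + (-32)*a^5*s^2*q*n + 16*a^6*q*t^2*w + 2*a^6*q^2*t*w + 64*a^6*p^2*n*t*w + 16*a^6*p^3*t + (-4)*a^6*p^3*q + 32*a^6*s*t*w + (-128)*a^6*s*n*t^2*w + 128*a^6*s*p*t^2 + (-256)*a^6*s*p*n*t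 + (-32)*a^6*s*p*q*t + 64*a^6*s*p*q*n + 8*a^6*s*p^2*w + 192*a^6*s^2*t*w + (-64)*a^6*s^2*n*w + 32*a^7*q*t^2 + (-4)*a^7*q^2*t + (-1)*a^7*q^3 + (-32)*a^7*p*t*w + 128*a^7*p*n*t^2*w + 128*a^7*p^2*n*t + (-32)*a^7*p^2*q*n + (-8)*a^7*p^3*w + 64*a^7*s*t + (-256)*a^7*s*n*t^2 + (-16)*a^7*s*q + 64*a^7*s*q*n*t + (-192)*a^7*s*p*t*w + 128*a^7*s*p*n*w + 256*a^7*s^2*t + (-64)*a^7*s^2*q + (-64)*a^8*t^2*w + (-48)*a^8*q*t*w + (-2)*a^8*q^2*w + (-64)*a^8*p*t + 256*a^8*p*n*t^2 + 16*a^8*p*q + (-64)*a^8*p*q*n*t + (-8)*a^8*p^2*t*w + (-64)*a^8*p^2*n*w + (-32)*a^8*s*w + (-64)*a^8*s*t^2*w + 448*a^8*s*n*t*w + (-256)*a^8*s*p*t + 64*a^8*s*p*q + (-128)*a^8*s^2*w + (-128)*a^9*t^2 + (-32)*a^9*q*t + 16*a^9*q^2 + 32*a^9*p*w + (-448)*a^9*p*n*t*w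 + (-16)*a^9*p^2*t + 4*a^9*p^2*q + (-128)*a^9*s*t^2 + 640*a^9*s*n*t + 32*a^9*s*q*t + (-160)*a^9*s*q*n + 128*a^9*s*p*w + 192*a^10*t*w + (-128)*a^10*n*t^2*w + 32*a^10*q*w + (-640)*a^10*p*n*t + 160*a^10*p*q*n + 8*a^10*p^2*w + 192*a^10*s*t*w + (-320)*a^10*s*n*w + 256*a^11*t + (-256)*a^11*n*t^2 + (-64)*a^11*q + 64*a^11*q*n*t + 320*a^11*p*n*w + 256*a^11*s*t + (-64)*a^11*s*q + (-128)*a^12*w + 384*a^12*n*t*w + (-128)*a^12*s*w + 512*a^13*n*t + (-128)*a^13*q*n + (-256)*a^14*n*w) * hL + ((-16)*a^2*s*p^2*t^4 + (-128)*a^2*s^2*t^5 + 128*a^2*s^2*n*t^4 + 16*a^2*s^2*p^2*t^2 + 128*a^2*s^3*t^3 + (-128)*a^2*s^3*n*t^2 + 16*a^3*p^3*t^4 + 128*a^3*s*p*t^5 + (-256)*a^3*s*p*n*t^4 + 128*a^3*s^2*p*n*t^2 + 32*a^4*q*t^5 + 4*a^4*q^2*t^4 + 128*a^4*p^2*n*t^4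 + (-16)*a^4*p^4*t^2 + 64*a^4*s*t^4 + (-256)*a^4*s*n*t^5 + (-32)*a^4*s*q*t^3 + (-4)*a^4*s*q^2*t^2 + (-64)*a^4*s*p^2*t^3 + 256*a^4*s*p^2*n*t^2 + (-16)*a^4*s*p^4 + (-64)*a^4*s^2*t^2 + 768*a^4*s^2*t^4 + 768*a^4*s^2*n*t^3 + (-1024)*a^4*s^2*n^2*t^2 + (-32)*a^4*s^2*p^2*t + 256*a^4*s^2*p^2*n + 512*a^4*s^3*t^2 + 256*a^4*s^3*n*t + (-1024)*a^4*s^3*n^2 + 1024*a^4*s^4 + (-64)*a^5*p*t^4 + 256*a^5*p*n*t^5 + (-32)*a^5*p*q*t^3 + (-4)*a^5*p*q^2*t^2 + (-64)*a^5*p^3*t^3 + (-256)*a^5*p^3*n*t^2 + 16*a^5*p^5 + (-768)*a^5*s*p*t^4 + 2048*a^5*s*p*n^2*t^2 + (-512)*a^5*s*p^3*n + (-1024)*a^5*s^2*p*t^2 + (-256)*a^5*s^2*p*n*t + 3072*a^5*s^2*p*n^2 + (-2048)*a^5*s^3*p + (-128)*a^6*t^5 + (-192)*a^6*q*t^4 +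 (-256)*a^6*q*n*t^3 + (-16)*a^6*q^2*t^3 + (-32)*a^6*q^2*n*t^2 + 64*a^6*p^2*t^2 + (-16)*a^6*p^2*t^4 + (-768)*a^6*p^2*n*t^3 + (-1024)*a^6*p^2*n^2*t^2 + 32*a^6*p^2*q*t + 4*a^6*p^2*q^2 + 32*a^6*p^4*t + 256*a^6*p^4*n + (-128)*a^6*s*t^3 + (-128)*a^6*s*t^5 + (-512)*a^6*s*n*t^2 + 1664*a^6*s*n*t^4 + 2048*a^6*s*n^2*t^3 + (-128)*a^6*s*q*t^2 + (-256)*a^6*s*q*n*t + (-24)*a^6*s*q^2*t + (-32)*a^6*s*q^2*n + 128*a^6*s*p^2 + 448*a^6*s*p^2*t^2 + (-512)*a^6*s*p^2*n*t + (-3072)*a^6*s*p^2*n^2 + 128*a^6*s^2*t + (-1536)*a^6*s^2*t^3 + (-1024)*a^6*s^2*n + (-512)*a^6*s^2*n*t^2 + 2048*a^6*s^2*n^2*t + (-512)*a^6*s^2*q + 1296*a^6*s^2*p^2 + (-1408)*a^6*s^3*t + 1920*a^6*s^3*n + 384*a^7*p*t^3 + 512*a^7*p*n*t^2 + (-1664)*a^7*p*n*t^4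 + (-2048)*a^7*p*n^2*t^3 + 128*a^7*p*q*t^2 + 256*a^7*p*q*n*t + 8*a^7*p*q^2*t + 32*a^7*p*q^2*n + (-128)*a^7*p^3 + 96*a^7*p^3*t^2 + 512*a^7*p^3*n*t + 1024*a^7*p^3*n^2 + 1792*a^7*s*p*t^3 + 2048*a^7*s*p*n + (-1280)*a^7*s*p*n*t^2 + (-4096)*a^7*s*p*n^2*t + 512*a^7*s*p*q + (-256)*a^7*s*p^3 + 2048*a^7*s^2*p*t + (-3968)*a^7*s^2*p*n + 768*a^8*t^4 + 1024*a^8*n*t^3 + (-256)*a^8*n*t^5 + (-128)*a^8*q*t + 416*a^8*q*t^3 + 512*a^8*q*n*t^2 + 48*a^8*q^2 + 20*a^8*q^2*t^2 + (-256)*a^8*p^2*t + 64*a^8*p^2*t^3 + (-1024)*a^8*p^2*n + 1920*a^8*p^2*n*t^2 + 2048*a^8*p^2*n^2*t + (-64)*a^8*p^2*q + (-32)*a^8*p^4 + (-256)*a^8*s + 832*a^8*s*t^2 + 768*a^8*s*t^4 + 2048*a^8*s*n*t + (-2560)*a^8*s*n*t^3 + (-5120)*a^8*s*n^2*t^2 +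 352*a^8*s*q*t + (-512)*a^8*s*q*n + (-4)*a^8*s*q^2 + (-640)*a^8*s*p^2*t + 3072*a^8*s*p^2*n + 960*a^8*s^2 + 2048*a^8*s^2*t^2 + (-1792)*a^8*s^2*n*t + (-2048)*a^8*s^2*n^2 + 1792*a^8*s^3 + 256*a^9*p + (-832)*a^9*p*t^2 + (-2048)*a^9*p*n*t + 4096*a^9*p*n*t^3 + 5120*a^9*p*n^2*t^2 + (-160)*a^9*p*q*t + 512*a^9*p*q*n + (-4)*a^9*p*q^2 + (-64)*a^9*p^3*t + (-1024)*a^9*p^3*n + (-1024)*a^9*s*p + (-2048)*a^9*s*p*t^2 + 3584*a^9*s*p*n*t + 4096*a^9*s*p*n^2 + (-2048)*a^9*s^2*p + 512*a^10*t + (-1664)*a^10*t^3 + (-2048)*a^10*n*t^2 + 1536*a^10*n*t^4 + 2048*a^10*n^2*t^3 + (-256)*a^10*q + (-384)*a^10*q*t^2 + (-256)*a^10*q*n*t + (-8)*a^10*q^2*t + (-32)*a^10*q^2*n + 384*a^10*p^2 + (-80)*a^10*p^2*t^2 + (-2048)*a^10*p^2*n*t + (-2048)*a^10*p^2*n^2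 + (-1024)*a^10*s*t + (-1664)*a^10*s*t^3 + (-1024)*a^10*s*n + 2688*a^10*s*n*t^2 + 4096*a^10*s*n^2*t + (-448)*a^10*s*q + 528*a^10*s*p^2 + (-1920)*a^10*s^2*t + 3456*a^10*s^2*n + 768*a^11*p*t + 1024*a^11*p*n + (-4736)*a^11*p*n*t^2 + (-4096)*a^11*p*n^2*t + 64*a^11*p*q + 16*a^11*p^3 + 1152*a^11*s*p*t + (-4096)*a^11*s*p*n + 1536*a^12*t^2 + 2048*a^12*n*t + (-3328)*a^12*n*t^3 + (-4096)*a^12*n^2*t^2 + 128*a^12*q*t + (-512)*a^12*q*n + 32*a^12*p^2*t + 1280*a^12*p^2*n + 768*a^12*s + 1536*a^12*s*t^2 + (-3072)*a^12*s*n*t + (-1024)*a^12*s*n^2 + 768*a^12*s^2 + (-256)*a^13*p + 2560*a^13*p*n*t + 1024*a^13*p*n^2 + (-256)*a^13*s*p + (-512)*a^14*t + 3072*a^14*n*t^2 + 2048*a^14*n^2*t + (-512)*a^14*s*t + 1536*a^14*s*n + (-512)*a^15*p*n + (-1024)*a^16*n*t) * hE1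
end
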